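/- arXiv:2406.04336 — 2 statements merged into one kernel-verified Lean document; each statement's English description precedes it below -/
import Mathlib

section
/- For each choice of graph matrix M ∈ {adjacency matrix A, Laplacian L, normalized Laplacian L̂}: for any two finite simple graphs G and H (with no isolated vertices) and vertices u ∈ V_G and x ∈ V_H, if χ^{(l)}_G(u) = χ^{(l)}_H(x) for every round l ≥ 0 of the EPWL colorings with matrix M, then (a) deg_G(u) = deg_H(x), and (b) 𝒫^{M_G}(u,u) = 𝒫^{M_H}(x,x). -/
open scoped Classical
open Matrix BigOperators

noncomputable section

namespace EPWL

/-! ### Generic node-coloring refinement with pairwise features in a type `α` -/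

/-- The common nested type of round-`l` colors: `C 0 = Unit`,
`C (l+1) = C l × Multiset (C l × α)`. -/
def Color (α : Type) : ℕ → Type
  | 0 => Unit
  | l + 1 => Color α l × Multiset (Color α l × α)

/-- The color refinement: `χ⁰(u) = ()` and
`χ^{l+1}(u) = (χ^l(u), {{(χ^l(v), f u v) : v}})`. -/
def colorFn {V : Type*} [Fintype V] {α : Type} (f : V → V → α) :
    (l : ℕ) → V → Color α l
  | 0 => fun _ => ()
  | l + 1 => fun u =>
      (colorFn f l u, Finset.univ.val.map fun v => (colorFn f l v, f u v))

/-- Two graphs (presented through their pairwise-feature functions) are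
indistinguishable by the node-coloring refinement: at every round, the
multisets of node colors agree. -/
def NodeIndist {V W : Type*} [Fintype V] [Fintype W] {α : Type}
    (f : V → V → α) (g : W → W → α) : Prop :=
  ∀ l : ℕ, Finset.univ.val.map (colorFn f l) = Finset.univ.val.map (colorFn g l)

/-- Atomic type of an ordered vertex pair: `0` if equal, `1` if adjacent,
`2` otherwise. -/
def atp {V : Type*} (G : SimpleGraph V) (u v : V) : ℕ :=
  if u = v then 0 else if G.Adj u v then 1 else 2

/-- 1-WL indistinguishability. -/
def WL1Indist {V W : Type*} [Fintype V] [Fintype W]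
    (G : SimpleGraph V) (H : SimpleGraph W) : Prop :=
  NodeIndist (atp G) (atp H)

/-! ### Graph matrices -/

/-- Real adjacency matrix. -/
def adjM {V : Type*} [Fintype V] (G : SimpleGraph V) : Matrix V V ℝ :=
  G.adjMatrix ℝ

/-- Real (diagonal) degree matrix. -/
def degM {V : Type*} [Fintype V] (G : SimpleGraph V) : Matrix V V ℝ :=
  Matrix.diagonal fun v => (G.degree v : ℝ)

/-- Laplacian matrix `L = D - A`. -/
def lapM {V : Type*} [Fintype V] (G : SimpleGraph V) : Matrix V V ℝ :=
  degM G - adjM G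

/-- The diagonal matrix `D^{-1/2}`. -/
def invSqrtDegM {V : Type*} [Fintype V] (G : SimpleGraph V) : Matrix V V ℝ :=
  Matrix.diagonal fun v => (Real.sqrt (G.degree v))⁻¹

/-- Normalized Laplacian `L̂ = D^{-1/2} L D^{-1/2}`. -/
def normLapM {V : Type*} [Fintype V] (G : SimpleGraph V) : Matrix V V ℝ :=
  invSqrtDegM G * lapM G * invSqrtDegM G

/-- Normalized adjacency matrix `Â = D^{-1/2} A D^{-1/2}`. -/
def normAdjM {V : Type*} [Fintype V] (G : SimpleGraph V) : Matrix V V ℝ :=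
  invSqrtDegM G * adjM G * invSqrtDegM G

/-- The diagonal matrix `D⁻¹` of inverse degrees. -/
def invDegM {V : Type*} [Fintype V] (G : SimpleGraph V) : Matrix V V ℝ :=
  Matrix.diagonal fun v => ((G.degree v : ℝ))⁻¹

/-- The random-walk matrix `D⁻¹ A`. -/
def rwM {V : Type*} [Fintype V] (G : SimpleGraph V) : Matrix V V ℝ :=
  invDegM G * adjM G

/-- The all-ones matrix `J`. -/
def allOnes (V : Type*) : Matrix V V ℝ := Matrix.of fun _ _ => 1

/-- A choice among the three graph matrices `A`, `L`, `L̂`. -/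
inductive MatChoice | adj | lap | normLap

/-- The graph matrix associated with a choice. -/
def matOf {V : Type*} [Fintype V] (c : MatChoice) (G : SimpleGraph V) :
    Matrix V V ℝ :=
  match c with
  | .adj => adjM G
  | .lap => lapM G
  | .normLap => normLapM G

/-! ### Spectral decompositions and the eigenspace projection invariant -/

/-- `IsSpectralDecomp M Λ P` says: `Λ` is the (finite) set of distinct
eigenvalues of the symmetric matrix `M` and, for `lam ∈ Λ`, `P lam` is the
orthogonal projection onto the eigenspace of `lam`. This is characterized
uniquely by: the `P lam` are symmetric idempotent nonzero matrices,
pairwise "orthogonal" (`P lam * P mu = 0` for `lam ≠ mu`), summing to the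
identity, with `∑ lam • P lam = M`. -/
structure IsSpectralDecomp {n : Type*} [Fintype n]
    (M : Matrix n n ℝ) (Λ : Finset ℝ) (P : ℝ → Matrix n n ℝ) : Prop where
  symm : ∀ lam ∈ Λ, (P lam)ᵀ = P lam
  idem : ∀ lam ∈ Λ, P lam * P lam = P lam
  nonzero : ∀ lam ∈ Λ, P lam ≠ 0
  orth : ∀ lam ∈ Λ, ∀ mu ∈ Λ, lam ≠ mu → P lam * P mu = 0
  sum_one : ∑ lam ∈ Λ, P lam = 1
  sum_smul : ∑ lam ∈ Λ, lam • P lam = M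

/-- The eigenspace projection invariant
`𝒫^M(u,v) = {{(lam, P_lam(u,v)) : lam eigenvalue of M}}`. -/
def projInv {n : Type*} (Λ : Finset ℝ) (P : ℝ → Matrix n n ℝ) (u v : n) :
    Multiset (ℝ × ℝ) :=
  Λ.val.map fun lam => (lam, P lam u v)

/-! ### Subgraph Weisfeiler-Lehman variants (SWL, PSWL) and 3-WL -/

/-- Round-`l` color type for SWL. -/
def SColor : ℕ → Type
  | 0 => ℕ
  | l + 1 => SColor l × Multiset (SColor l × ℕ)

/-- Initial pair color: `1` on the diagonal, `0` off it. -/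
def initPairColor {V : Type*} (u v : V) : ℕ := if u = v then 1 else 0

/-- The SWL pair-coloring. -/
def swl {V : Type*} [Fintype V] (G : SimpleGraph V) :
    (l : ℕ) → V → V → SColor l
  | 0 => fun u v => initPairColor u v
  | l + 1 => fun u v =>
      (swl G l u v, Finset.univ.val.map fun w => (swl G l u w, atp G v w))

/-- SWL indistinguishability. -/
def SWLIndist {V W : Type*} [Fintype V] [Fintype W]
    (G : SimpleGraph V) (H : SimpleGraph W) : Prop :=
  ∀ l : ℕ,
    ((Finset.univ : Finset (V × V)).val.map fun p => swl G l p.1 p.2) =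
      ((Finset.univ : Finset (W × W)).val.map fun p => swl H l p.1 p.2)

/-- Round-`l` color type for PSWL. -/
def PSColor : ℕ → Type
  | 0 => ℕ
  | l + 1 => PSColor l × PSColor l × Multiset (PSColor l × ℕ)

/-- The PSWL pair-coloring. -/
def pswl {V : Type*} [Fintype V] (G : SimpleGraph V) :
    (l : ℕ) → V → V → PSColor l
  | 0 => fun u v => initPairColor u v
  | l + 1 => fun u v =>
      (pswl G l u v, pswl G l v v,
        Finset.univ.val.map fun w => (pswl G l u w, atp G v w))

/-- PSWL indistinguishability. -/
def PSWLIndist {V W : Type*} [Fintype V] [Fintype W]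
    (G : SimpleGraph V) (H : SimpleGraph W) : Prop :=
  ∀ l : ℕ,
    ((Finset.univ : Finset (V × V)).val.map fun p => pswl G l p.1 p.2) =
      ((Finset.univ : Finset (W × W)).val.map fun p => pswl H l p.1 p.2)

/-- Round-`l` color type for 3-WL; the initial color records which of
`u, v, w` coincide and which of the pairs are edges. -/
def W3Color : ℕ → Type
  | 0 => Bool × Bool × Bool × Bool × Bool × Bool
  | l + 1 => W3Color l × Multiset (W3Color l × W3Color l × W3Color l)

/-- The 3-WL triple-coloring. -/
def wl3 {V : Type*} [Fintype V] (G : SimpleGraph V) :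
    (l : ℕ) → V → V → V → W3Color l
  | 0 => fun u v w =>
      (decide (u = v), decide (u = w), decide (v = w),
        decide (G.Adj u v), decide (G.Adj u w), decide (G.Adj v w))
  | l + 1 => fun u v w =>
      (wl3 G l u v w,
        Finset.univ.val.map fun z =>
          (wl3 G l z v w, wl3 G l u z w, wl3 G l u v z))

/-- 3-WL indistinguishability. -/
def WL3Indist {V W : Type*} [Fintype V] [Fintype W]
    (G : SimpleGraph V) (H : SimpleGraph W) : Prop :=
  ∀ l : ℕ,
    ((Finset.univ : Finset (V × V × V)).val.map fun p => wl3 G l p.1 p.2.1 p.2.2) =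
      ((Finset.univ : Finset (W × W × W)).val.map fun p => wl3 H l p.1 p.2.1 p.2.2)

/-! ### Distances -/

/-- The shortest-path distance, valued in `ℕ∞`. -/
def spd {V : Type*} (G : SimpleGraph V) (u v : V) : ℕ∞ := G.edist u v

/-- The four Penrose conditions characterizing the Moore–Penrose
pseudoinverse `X` of `B`. -/
def IsMoorePenrose {n : Type*} [Fintype n] (B X : Matrix n n ℝ) : Prop :=
  B * X * B = B ∧ X * B * X = X ∧ (B * X)ᵀ = B * X ∧ (X * B)ᵀ = X * B

/-- Resistance distance computed from (a Moore–Penrose pseudoinverse of)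
the Laplacian: `X(u,u) + X(v,v) - 2X(u,v)` for vertices in the same
connected component, and `∞` otherwise. -/
def rdOf {V : Type*} (G : SimpleGraph V) (X : Matrix V V ℝ) (u v : V) :
    WithTop ℝ :=
  if G.Reachable u v then ((X u u + X v v - 2 * X u v : ℝ) : WithTop ℝ) else ⊤

/-- Matrix exponential, as the everywhere-convergent power series
`exp B = ∑ Bⁿ/n!`. -/
def matExp {V : Type*} [Fintype V] (B : Matrix V V ℝ) : Matrix V V ℝ :=
  ∑' n : ℕ, ((n.factorial : ℝ))⁻¹ • B ^ n

/-! ### Connectivity notions -/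

/-- Number of connected components. -/
def numComponents {V : Type*} (G : SimpleGraph V) : ℕ :=
  Nat.card G.ConnectedComponent

/-- A cut vertex: deleting it (and all incident edges) strictly increases
the number of connected components. -/
def IsCutVertex {V : Type*} (G : SimpleGraph V) (v : V) : Prop :=
  numComponents G < numComponents (G.induce {w : V | w ≠ v})

/-- A cut edge: it is an edge whose deletion strictly increases the number
of connected components. -/
def IsCutEdge {V : Type*} (G : SimpleGraph V) (e : Sym2 V) : Prop :=
  e ∈ G.edgeSet ∧ numComponents G < numComponents (G.deleteEdges {e})


/-- Sum of second components of a feature multiset. -/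
def psum (m : Multiset (ℝ × ℝ)) : ℝ := (m.map Prod.snd).sum

/-- Weighted sum `∑ λ·p` of a feature multiset. -/
def wsum (m : Multiset (ℝ × ℝ)) : ℝ := (m.map fun p => p.1 * p.2).sum

lemma psum_projInv {n : Type*} [Fintype n] {M : Matrix n n ℝ} {Λ : Finset ℝ}
    {P : ℝ → Matrix n n ℝ} (hP : IsSpectralDecomp M Λ P) (u v : n) :
    psum (projInv Λ P u v) = (1 : Matrix n n ℝ) u v := by
  have h := congrArg (fun (A : Matrix n n ℝ) => A u v) hP.sum_one
  simp only [Matrix.sum_apply] at h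
  rw [psum, projInv, Multiset.map_map, ← h, Finset.sum_eq_multiset_sum]
  rfl

lemma wsum_projInv {n : Type*} [Fintype n] {M : Matrix n n ℝ} {Λ : Finset ℝ}
    {P : ℝ → Matrix n n ℝ} (hP : IsSpectralDecomp M Λ P) (u v : n) :
    wsum (projInv Λ P u v) = M u v := by
  have h := congrArg (fun (A : Matrix n n ℝ) => A u v) hP.sum_smul
  simp only [Matrix.sum_apply, Matrix.smul_apply, smul_eq_mul] at h
  rw [wsum, projInv, Multiset.map_map, ← h, Finset.sum_eq_multiset_sum]
  rfl

lemma matOf_apply_ne_zero_iff {V : Type*} [Fintype V] (G : SimpleGraph V)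
    (hG : ∀ v, 0 < G.degree v) (c : MatChoice) {u v : V} (huv : u ≠ v) :
    matOf c G u v ≠ 0 ↔ G.Adj u v := by
  have hlap : lapM G u v = -(if G.Adj u v then (1:ℝ) else 0) := by
    simp [lapM, degM, adjM, Matrix.sub_apply, Matrix.diagonal_apply_ne _ huv]
  cases c with
  | adj =>
      simp only [matOf, adjM, SimpleGraph.adjMatrix_apply]
      split <;> simp_all
  | lap =>
      simp only [matOf, hlap]
      split <;> simp_all
  | normLap =>
      have hu : (Real.sqrt (G.degree u))⁻¹ ≠ 0 := by
        have := Real.sqrt_pos.mpr (by exact_mod_cast hG u : (0:ℝ) < G.degree u)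
        positivity
      have hv : (Real.sqrt (G.degree v))⁻¹ ≠ 0 := by
        have := Real.sqrt_pos.mpr (by exact_mod_cast hG v : (0:ℝ) < G.degree v)
        positivity
      have hentry : normLapM G u v =
          (Real.sqrt (G.degree u))⁻¹ * lapM G u v * (Real.sqrt (G.degree v))⁻¹ := by
        simp [normLapM, invSqrtDegM, Matrix.diagonal_mul, Matrix.mul_diagonal]
      simp only [matOf, hentry, hlap]
      split <;> simp_all

/-- Key pointwise characterization: the feature multiset `projInv Λ P u v`
detects both the diagonal and adjacency. -/
lemma projInv_detects {V : Type*} [Fintype V] (G : SimpleGraph V)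
    (hG : ∀ v, 0 < G.degree v) (c : MatChoice) {Λ : Finset ℝ}
    {P : ℝ → Matrix V V ℝ} (hP : IsSpectralDecomp (matOf c G) Λ P) (u v : V) :
    (psum (projInv Λ P u v) = 1 ↔ u = v) ∧
      ((wsum (projInv Λ P u v) ≠ 0 ∧ psum (projInv Λ P u v) ≠ 1) ↔ G.Adj u v) := by
  rw [psum_projInv hP, wsum_projInv hP]
  rcases eq_or_ne u v with rfl | huv
  · simp [Matrix.one_apply]
  · have h1 : (1 : Matrix V V ℝ) u v = 0 := Matrix.one_apply_ne huv
    rw [h1]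
    constructor
    · constructor <;> intro h'
      · exact absurd h' (by norm_num)
      · exact absurd h' huv
    · rw [matOf_apply_ne_zero_iff G hG c huv]
      constructor
      · exact fun h' => h'.1
      · exact fun h' => ⟨h', by norm_num⟩

/-- The degree is recoverable from the level-1 feature multiset. -/
lemma degree_eq_card_filter {V : Type*} [Fintype V] (G : SimpleGraph V)
    (hG : ∀ v, 0 < G.degree v) (c : MatChoice) {Λ : Finset ℝ}
    {P : ℝ → Matrix V V ℝ} (hP : IsSpectralDecomp (matOf c G) Λ P) (u : V) :
    (G.degree u : ℕ) = Multiset.card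
      ((Finset.univ.val.map (projInv Λ P u)).filter
        fun m => wsum m ≠ 0 ∧ psum m ≠ 1) := by
  rw [Multiset.filter_map, Multiset.card_map]
  simp only [Function.comp_def]
  rw [Multiset.filter_congr (fun v _ => (projInv_detects G hG c hP u v).2)]
  have h2 : Multiset.filter (fun v => G.Adj u v) Finset.univ.val
      = (Finset.univ.filter (fun v => G.Adj u v)).val := by
    rw [Finset.filter_val]
  rw [h2, ← Finset.card_def, ← SimpleGraph.neighborFinset_eq_filter]
  rfl

/-- The diagonal feature multiset is recoverable from the level-1 data. -/
lemma diag_filter_eq {V : Type*} [Fintype V] (G : SimpleGraph V)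
    (hG : ∀ v, 0 < G.degree v) (c : MatChoice) {Λ : Finset ℝ}
    {P : ℝ → Matrix V V ℝ} (hP : IsSpectralDecomp (matOf c G) Λ P) (u : V) :
    ((Finset.univ.val.map (projInv Λ P u)).filter fun m => psum m = 1)
      = {projInv Λ P u u} := by
  rw [Multiset.filter_map]
  simp only [Function.comp_def]
  rw [Multiset.filter_congr (fun v _ => (projInv_detects G hG c hP u v).1)]
  have h2 : Multiset.filter (fun v => u = v) Finset.univ.val = {u} := by
    have h3 : Multiset.filter (fun v => u = v) Finset.univ.val
        = (Finset.univ.filter (fun v => u = v)).val := by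
      rw [Finset.filter_val]
    rw [h3, Finset.filter_eq Finset.univ u, if_pos (Finset.mem_univ u)]
    rfl
  rw [h2, Multiset.map_singleton]

/-- For each `M ∈ {A, L, L̂}`: if two vertices receive
equal EPWL colors at every round, then they have equal degrees and equal
diagonal eigenspace projection invariants. -/
theorem epwl_color_determines_degree_and_diag {V W : Type*} [Fintype V] [Fintype W]
    (G : SimpleGraph V) (H : SimpleGraph W)
    (hG : ∀ v, 0 < G.degree v) (hH : ∀ w, 0 < H.degree w)
    (c : MatChoice)
    (ΛG : Finset ℝ) (PG : ℝ → Matrix V V ℝ)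
    (hPG : IsSpectralDecomp (matOf c G) ΛG PG)
    (ΛH : Finset ℝ) (PH : ℝ → Matrix W W ℝ)
    (hPH : IsSpectralDecomp (matOf c H) ΛH PH)
    (u : V) (x : W)
    (h : ∀ l : ℕ, colorFn (projInv ΛG PG) l u = colorFn (projInv ΛH PH) l x) :
    G.degree u = H.degree x ∧ projInv ΛG PG u u = projInv ΛH PH x x := by
  have h1 := congrArg Prod.snd (h 1)
  have hm : Finset.univ.val.map (projInv ΛG PG u)
      = Finset.univ.val.map (projInv ΛH PH x) := by
    have := congrArg (Multiset.map Prod.snd) h1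
    simpa [colorFn, Multiset.map_map, Function.comp] using this
  constructor
  · rw [degree_eq_card_filter G hG c hPG u, degree_eq_card_filter H hH c hPH x, hm]
  · have hs : ({projInv ΛG PG u u} : Multiset (Multiset (ℝ × ℝ)))
        = {projInv ΛH PH x x} := by
      rw [← diag_filter_eq G hG c hPG u, ← diag_filter_eq H hH c hPH x, hm]
    exact Multiset.singleton_inj.mp hs

end EPWL
end
end

section
/- If two finite simple graphs G and H (with no isolated vertices) are EPWL-indistinguishable with respect to the normalized Laplacian L̂, then G and H are GD-WL-indistinguishable with respect to the shortest-path distance SPD. (GD-WL with shortest-path distance is upper bounded in expressive power by EPWL with L̂.) -/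
open scoped Classical
open Matrix BigOperators

noncomputable section

namespace EPWL

/-!
Since `Â := D^{-1/2} A D^{-1/2} = I - L̂ = ∑ (1 - λ) P_λ`, the spectral decomposition gives
`(Â^k)(u,v) = ∑_λ (1 - λ)^k P_λ(u,v)`, a function of `𝒫^{L̂}(u,v)`. The matrix `Â` is entrywise
nonnegative with the same support as `A`, so `(Â^k)(u,v) ≠ 0` iff `(A^k)(u,v) ≠ 0`, i.e. iff there
is a walk of length `k` from `u` to `v`. Hence `SPD(u,v)`, the least such `k`, is a function of
`𝒫^{L̂}(u,v)`, and refining colors by a function of the pair feature cannot separate more graphs.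
-/

section ColorRefinement

variable {α β : Type}

def mapColor (φ : α → β) : (l : ℕ) → Color α l → Color β l
  | 0 => id
  | l + 1 => fun c => (mapColor φ l c.1, c.2.map fun p => (mapColor φ l p.1, φ p.2))

theorem colorFn_comp {V : Type*} [Fintype V] (φ : α → β) (f : V → V → α) (l : ℕ) (u : V) :
    colorFn (fun u v => φ (f u v)) l u = mapColor φ l (colorFn f l u) := by
  induction l generalizing u with
  | zero => rfl
  | succ l ih =>
    simp only [colorFn, mapColor, Multiset.map_map, Function.comp_def, ih]
    rfl

theorem NodeIndist.comp {V W : Type*} [Fintype V] [Fintype W]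
    {f : V → V → α} {g : W → W → α} (h : NodeIndist f g) (φ : α → β) :
    NodeIndist (fun u v => φ (f u v)) (fun u v => φ (g u v)) := by
  intro l
  have key := congrArg (Multiset.map (mapColor φ l)) (h l)
  simpa only [Multiset.map_map, Function.comp_def, ← colorFn_comp] using key

end ColorRefinement

theorem _root_.Matrix.pow_apply_eq_zero_iff_of_nonneg {n R : Type*} [Fintype n] [DecidableEq n]
    [Semiring R] [PartialOrder R] [IsOrderedRing R] [NoZeroDivisors R] {M N : Matrix n n R}
    (hM : ∀ i j, 0 ≤ M i j) (hN : ∀ i j, 0 ≤ N i j) (hMN : ∀ i j, M i j = 0 ↔ N i j = 0)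
    (k : ℕ) (i j : n) : (M ^ k) i j = 0 ↔ (N ^ k) i j = 0 := by
  induction k generalizing j with
  | zero => rfl
  | succ k ih =>
    rw [pow_succ, pow_succ, mul_apply, mul_apply,
      Finset.sum_eq_zero_iff_of_nonneg fun l _ => mul_nonneg (pow_apply_nonneg hM k i l) (hM l j),
      Finset.sum_eq_zero_iff_of_nonneg fun l _ => mul_nonneg (pow_apply_nonneg hN k i l) (hN l j)]
    simp only [mul_eq_zero, ih, hMN]

theorem _root_.SimpleGraph.adjMatrix_pow_apply_ne_zero_iff {V R : Type*} [Fintype V] [DecidableEq V]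
    (G : SimpleGraph V) [DecidableRel G.Adj] [Semiring R] [CharZero R] (k : ℕ) (u v : V) :
    (G.adjMatrix R ^ k) u v ≠ 0 ↔ ∃ p : G.Walk u v, p.length = k := by
  rw [SimpleGraph.adjMatrix_pow_apply_eq_card_walk, Nat.cast_ne_zero, ← Nat.pos_iff_ne_zero,
    Fintype.card_pos_iff, Set.nonempty_coe_sort]
  rfl

theorem _root_.SimpleGraph.edist_eq_iInf_adjMatrix_pow {V : Type*} [Fintype V] [DecidableEq V]
    (G : SimpleGraph V) [DecidableRel G.Adj] (R : Type*) [Semiring R] [CharZero R] (u v : V) :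
    G.edist u v = ⨅ (k : ℕ) (_ : (G.adjMatrix R ^ k) u v ≠ 0), (k : ℕ∞) := by
  simp only [SimpleGraph.adjMatrix_pow_apply_ne_zero_iff]
  refine le_antisymm (le_iInf₂ fun k ⟨p, hp⟩ => hp ▸ SimpleGraph.edist_le p) (le_iInf fun p => ?_)
  exact iInf₂_le p.length ⟨p, rfl⟩

section Spectral

variable {n : Type*} [Fintype n] {M : Matrix n n ℝ} {Λ : Finset ℝ} {P : ℝ → Matrix n n ℝ}

theorem IsSpectralDecomp.sum_smul_pow (h : IsSpectralDecomp M Λ P) (c : ℝ → ℝ) (k : ℕ) :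
    (∑ lam ∈ Λ, c lam • P lam) ^ k = ∑ lam ∈ Λ, c lam ^ k • P lam := by
  induction k with
  | zero => simpa using h.sum_one.symm
  | succ k ih =>
    rw [pow_succ, ih, Finset.sum_mul]
    refine Finset.sum_congr rfl fun lam hlam => ?_
    rw [Finset.mul_sum, Finset.sum_eq_single lam]
    · rw [smul_mul_smul_comm, h.idem lam hlam, ← pow_succ]
    · intro mu hmu hne
      rw [smul_mul_smul_comm, h.orth lam hlam mu hmu hne.symm, smul_zero]
    · exact fun hlam' => absurd hlam hlam'

end Spectral

theorem sum_map_projInv {n : Type*} (Λ : Finset ℝ) (P : ℝ → Matrix n n ℝ) (c : ℝ → ℝ)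
    (u v : n) :
    ((projInv Λ P u v).map fun p => c p.1 * p.2).sum = (∑ lam ∈ Λ, c lam • P lam) u v := by
  rw [projInv, Multiset.map_map, Matrix.sum_apply, Finset.sum_eq_multiset_sum]
  simp

section NormalizedAdjacency

variable {V : Type*} [Fintype V] (G : SimpleGraph V)

theorem invSqrtDegM_mul_degM_mul_invSqrtDegM (hG : ∀ v, 0 < G.degree v) :
    invSqrtDegM G * degM G * invSqrtDegM G = 1 := by
  rw [invSqrtDegM, degM, diagonal_mul_diagonal, diagonal_mul_diagonal, ← diagonal_one]
  congr 1
  funext v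
  have hv : (0 : ℝ) < G.degree v := by exact_mod_cast hG v
  have hs : 0 < √(G.degree v : ℝ) := Real.sqrt_pos.2 hv
  field_simp
  exact (Real.sq_sqrt hv.le).symm

theorem one_sub_normLapM (hG : ∀ v, 0 < G.degree v) : 1 - normLapM G = normAdjM G := by
  rw [normLapM, lapM, Matrix.mul_sub, Matrix.sub_mul,
    invSqrtDegM_mul_degM_mul_invSqrtDegM G hG, normAdjM, sub_sub_cancel]

theorem normAdjM_apply (u v : V) :
    normAdjM G u v = (√(G.degree u : ℝ))⁻¹ * adjM G u v * (√(G.degree v : ℝ))⁻¹ := by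
  rw [normAdjM, invSqrtDegM, mul_diagonal, diagonal_mul]

theorem adjM_nonneg (u v : V) : 0 ≤ adjM G u v := by
  rw [adjM, SimpleGraph.adjMatrix_apply]
  positivity

theorem normAdjM_nonneg (u v : V) : 0 ≤ normAdjM G u v := by
  rw [normAdjM_apply]
  have := adjM_nonneg G u v
  positivity

theorem normAdjM_eq_zero_iff (hG : ∀ v, 0 < G.degree v) (u v : V) :
    normAdjM G u v = 0 ↔ adjM G u v = 0 := by
  simp [normAdjM_apply, (hG u).ne', (hG v).ne']

theorem normAdjM_pow_apply_eq_zero_iff (hG : ∀ v, 0 < G.degree v) (k : ℕ) (u v : V) :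
    (normAdjM G ^ k) u v = 0 ↔ (adjM G ^ k) u v = 0 :=
  Matrix.pow_apply_eq_zero_iff_of_nonneg (normAdjM_nonneg G) (adjM_nonneg G)
    (normAdjM_eq_zero_iff G hG) k u v

end NormalizedAdjacency

/-- Reads the shortest-path distance off `𝒫^{L̂}(u,v)`: the sum below is `(Â^k)(u,v)`. -/
def spdOfProjInv (s : Multiset (ℝ × ℝ)) : ℕ∞ :=
  ⨅ (k : ℕ) (_ : (s.map fun p => (1 - p.1) ^ k * p.2).sum ≠ 0), (k : ℕ∞)

theorem spd_eq_spdOfProjInv {V : Type*} [Fintype V] (G : SimpleGraph V)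
    (hG : ∀ v, 0 < G.degree v) {Λ : Finset ℝ} {P : ℝ → Matrix V V ℝ}
    (hP : IsSpectralDecomp (normLapM G) Λ P) (u v : V) :
    spd G u v = spdOfProjInv (projInv Λ P u v) := by
  have hÂ : ∑ lam ∈ Λ, (1 - lam) • P lam = normAdjM G := by
    simp only [sub_smul, one_smul, Finset.sum_sub_distrib, hP.sum_one, hP.sum_smul,
      one_sub_normLapM G hG]
  rw [spd, G.edist_eq_iInf_adjMatrix_pow ℝ, spdOfProjInv]
  refine iInf_congr fun k => iInf_congr_Prop ?_ fun _ => rfl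
  rw [sum_map_projInv Λ P (fun lam => (1 - lam) ^ k), ← hP.sum_smul_pow, hÂ, Ne, Ne,
    normAdjM_pow_apply_eq_zero_iff G hG]
  rfl

/-- If `G` and `H` are EPWL-indistinguishable with respect
to the normalized Laplacian, then they are GD-WL-indistinguishable with
respect to the shortest-path distance. -/
theorem epwl_bounds_gdwl_spd {V W : Type*} [Fintype V] [Fintype W]
    (G : SimpleGraph V) (H : SimpleGraph W)
    (hG : ∀ v, 0 < G.degree v) (hH : ∀ w, 0 < H.degree w)
    (ΛG : Finset ℝ) (PG : ℝ → Matrix V V ℝ)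
    (hPG : IsSpectralDecomp (normLapM G) ΛG PG)
    (ΛH : Finset ℝ) (PH : ℝ → Matrix W W ℝ)
    (hPH : IsSpectralDecomp (normLapM H) ΛH PH)
    (hEP : NodeIndist (projInv ΛG PG) (projInv ΛH PH)) :
    NodeIndist (spd G) (spd H) := by
  have hG' : spd G = fun u v => spdOfProjInv (projInv ΛG PG u v) :=
    funext₂ (spd_eq_spdOfProjInv G hG hPG)
  have hH' : spd H = fun u v => spdOfProjInv (projInv ΛH PH u v) :=
    funext₂ (spd_eq_spdOfProjInv H hH hPH)
  rw [hG', hH']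
  exact hEP.comp spdOfProjInv

end EPWL
end
end
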